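/- arXiv:2110.09026 — 3 statements merged into one kernel-verified Lean document; each statement's English description precedes it below -/
import Mathlib

section
/- Let X be a type of variables, φ a Boolean formula over X given semantically as a predicate on assignments σ : X → Bool, and I ⊆ P ⊆ X. If I is an independent support of P for φ, then the map sending the restriction σ↓P of a solution σ to its further restriction σ↓I is a well-defined bijection from the set {σ↓P : σ a solution of φ} onto the set {σ↓I : σ a solution of φ}; in particular these two sets have equal cardinality. -/
/-- `I` is an independent support of `P` for `φ`: any two solutions of `φ` that
agree on `I` also agree on `P`. -/
def IndepSupport {X : Type*} (φ : (X → Bool) → Prop) (I P : Set X) : Prop :=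
  ∀ σ₁ σ₂ : X → Bool, φ σ₁ → φ σ₂ → (∀ i ∈ I, σ₁ i = σ₂ i) → ∀ p ∈ P, σ₁ p = σ₂ p

/-!
Restricting a solution to `I` factors through its restriction to `P`, so `σ↓P ↦ σ↓I` maps the
projections of the solutions onto `P` onto their projections onto `I`. Independence of the
support is precisely injectivity of this map on those projections, which makes it a bijection.
-/

open Set

theorem image_domRestrict_setOf {X β : Type*} (φ : (X → β) → Prop) (S : Set X) :
    S.domRestrict '' {σ | φ σ} = {g : S → β | ∃ σ : X → β, φ σ ∧ g = fun s : S => σ s.1} := by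
  ext g
  exact exists_congr fun _ => and_congr_right fun _ => eq_comm

theorem IndepSupport.injOn_domRestrict₂ {X : Type*} {φ : (X → Bool) → Prop} {I P : Set X}
    (h : IndepSupport φ I P) (hIP : I ⊆ P) :
    InjOn (domRestrict₂ hIP) (P.domRestrict '' {σ | φ σ}) := by
  rintro _ ⟨σ₁, hσ₁, rfl⟩ _ ⟨σ₂, hσ₂, rfl⟩ heq
  funext p
  exact h σ₁ σ₂ hσ₁ hσ₂ (fun i hi => congrFun heq ⟨i, hi⟩) p.1 p.2

/-- If `I` is an independent support of `P` for `φ`, then the restriction map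
`σ↓P ↦ σ↓I` is a bijection from `{σ↓P : σ ⊨ φ}` onto `{σ↓I : σ ⊨ φ}`;
in particular the two sets have equal cardinality. -/
theorem indepSupport_bijOn_restrict {X : Type*} (φ : (X → Bool) → Prop)
    (I P : Set X) (hIP : I ⊆ P) (h : IndepSupport φ I P) :
    Set.BijOn (fun (g : P → Bool) (i : I) => g (Set.inclusion hIP i))
      {g : P → Bool | ∃ σ : X → Bool, φ σ ∧ g = fun p : P => σ p.1}
      {g : I → Bool | ∃ σ : X → Bool, φ σ ∧ g = fun i : I => σ i.1} ∧
    Cardinal.mk {g : P → Bool | ∃ σ : X → Bool, φ σ ∧ g = fun p : P => σ p.1} =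
      Cardinal.mk {g : I → Bool | ∃ σ : X → Bool, φ σ ∧ g = fun i : I => σ i.1} := by
  rw [← image_domRestrict_setOf, ← image_domRestrict_setOf]
  have hbij : BijOn (domRestrict₂ hIP) (P.domRestrict '' {σ | φ σ})
      (I.domRestrict '' {σ | φ σ}) := by
    rw [← domRestrict₂_comp_domRestrict hIP, image_comp]
    exact (h.injOn_domRestrict₂ hIP).bijOn_image
  exact ⟨hbij, Cardinal.mk_congr (hbij.equiv _)⟩
end

section
/- Let X be a type of variables, φ a Boolean formula over X given semantically as a predicate on assignments σ : X → Bool, I ⊆ P ⊆ X, and x ∈ I. Suppose I is an independent support of P for φ. Then I \ {x} is an independent support of P for φ if and only if x is implicitly defined by I \ {x} for φ. -/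
/-- `x` is implicitly defined by `I` for `φ`: any two solutions of `φ` that agree
on `I` assign the same value to `x`. -/
def ImplicitlyDefined {X : Type*} (φ : (X → Bool) → Prop) (I : Set X) (x : X) : Prop :=
  ∀ σ₁ σ₂ : X → Bool, φ σ₁ → φ σ₂ → (∀ i ∈ I, σ₁ i = σ₂ i) → σ₁ x = σ₂ x

section

variable {X : Type*} {φ : (X → Bool) → Prop} {I J P Q : Set X} {x : X}

theorem indepSupport_iff_forall_implicitlyDefined :
    IndepSupport φ I P ↔ ∀ p ∈ P, ImplicitlyDefined φ I p :=
  ⟨fun h p hp σ₁ σ₂ h₁ h₂ hI => h σ₁ σ₂ h₁ h₂ hI p hp,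
    fun h σ₁ σ₂ h₁ h₂ hI p hp => h p hp σ₁ σ₂ h₁ h₂ hI⟩

theorem IndepSupport.mono_right (h : IndepSupport φ I P) (hQP : Q ⊆ P) :
    IndepSupport φ I Q :=
  fun σ₁ σ₂ h₁ h₂ hI q hq => h σ₁ σ₂ h₁ h₂ hI q (hQP hq)

theorem IndepSupport.trans (hJI : IndepSupport φ J I) (hIP : IndepSupport φ I P) :
    IndepSupport φ J P :=
  fun σ₁ σ₂ h₁ h₂ hJ => hIP σ₁ σ₂ h₁ h₂ (hJI σ₁ σ₂ h₁ h₂ hJ)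

theorem ImplicitlyDefined.indepSupport_insert (hx : ImplicitlyDefined φ J x) :
    IndepSupport φ J (insert x J) := by
  rintro σ₁ σ₂ h₁ h₂ hJ p (rfl | hp)
  · exact hx σ₁ σ₂ h₁ h₂ hJ
  · exact hJ p hp

end

/-- Given an independent support `I` of `P` and `x ∈ I`, the set `I \ {x}` is an
independent support of `P` iff `x` is implicitly defined by `I \ {x}`. -/
theorem indepSupport_erase_iff {X : Type*} (φ : (X → Bool) → Prop)
    (I P : Set X) (x : X) (hIP : I ⊆ P) (hx : x ∈ I)
    (h : IndepSupport φ I P) :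
    IndepSupport φ (I \ {x}) P ↔ ImplicitlyDefined φ (I \ {x}) x := by
  refine ⟨fun hErase => indepSupport_iff_forall_implicitlyDefined.1 hErase x (hIP hx),
    fun hDef => ?_⟩
  have hI : IndepSupport φ (I \ {x}) I :=
    hDef.indepSupport_insert.mono_right (Set.subset_insert_sdiff_singleton x I)
  exact hI.trans h
end

section
/- Let X be a type of variables, φ a Boolean formula over X given semantically as a predicate on assignments σ : X → Bool, P ⊆ X a projection set, and D ⊆ P a set of 'gate-defined' variables. Suppose for each v ∈ D there is a set of input variables N(v) ⊆ P and a function f_v : (N(v) → Bool) → Bool such that every solution σ of φ satisfies σ(v) = f_v(σ↓N(v)). Suppose further that the relation r on D given by r u v ↔ u ∈ N(v) is well-founded (i.e., the gate graph restricted to D is acyclic). Then P \ D is an independent support of P for φ. (Correctness of the explicit, gate-identification phase: removing a feedback vertex set W together with keeping the roots, so that the remaining gate-defined variables form an acyclic subgraph, yields an independent support W ∪ Root(G).) -/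
theorem eqOn_of_acyclic_gates {X α : Type*} (D : Set X) (N : X → Set X)
    (f : (v : X) → (N v → α) → α) (σ₁ σ₂ : X → α)
    (hgate₁ : ∀ v ∈ D, σ₁ v = f v (fun i => σ₁ i))
    (hgate₂ : ∀ v ∈ D, σ₂ v = f v (fun i => σ₂ i))
    (hinputs : ∀ v ∈ D, ∀ i ∈ N v, i ∉ D → σ₁ i = σ₂ i)
    (hacyc : WellFounded (fun u v : D => (u : X) ∈ N (v : X))) :
    Set.EqOn σ₁ σ₂ D := by
  suffices h : ∀ d : D, σ₁ d = σ₂ d from fun d hd => h ⟨d, hd⟩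
  intro d
  induction d using hacyc.induction with
  | _ d ih =>
    rw [hgate₁ d d.2, hgate₂ d d.2]
    congr 1
    funext i
    by_cases hiD : (i : X) ∈ D
    · exact ih ⟨i, hiD⟩ i.2
    · exact hinputs d d.2 i i.2 hiD

theorem gate_identification_indepSupport_general {X : Type*} (φ : (X → Bool) → Prop)
    (P D : Set X)
    (N : X → Set X) (f : (v : X) → ((N v) → Bool) → Bool)
    (hNP : ∀ v ∈ D, N v ⊆ P)
    (hgate : ∀ v ∈ D, ∀ σ : X → Bool, φ σ → σ v = f v (fun i => σ i.1))
    (hacyc : WellFounded (fun u v : D => (u : X) ∈ N (v : X))) :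
    IndepSupport φ (P \ D) P := by
  intro σ₁ σ₂ h₁ h₂ hagree p hp
  have hD : Set.EqOn σ₁ σ₂ D :=
    eqOn_of_acyclic_gates D N f σ₁ σ₂ (fun v hv => hgate v hv σ₁ h₁)
      (fun v hv => hgate v hv σ₂ h₂)
      (fun v hv i hi hiD => hagree i ⟨hNP v hv hi, hiD⟩) hacyc
  by_cases hpD : p ∈ D
  · exact hD hpD
  · exact hagree p ⟨hp, hpD⟩

/-- Correctness of the explicit gate-identification phase: if every variable
`v` in `D ⊆ P` is computed by a gate `f v` from its inputs `N v ⊆ P` on every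
solution of `φ`, and the gate graph restricted to `D` is acyclic (the
input-of relation on `D` is well-founded), then `P \ D` is an independent
support of `P` for `φ`. -/
theorem gate_identification_indepSupport {X : Type*} (φ : (X → Bool) → Prop)
    (P D : Set X) (hDP : D ⊆ P)
    (N : X → Set X) (f : (v : X) → ((N v) → Bool) → Bool)
    (hNP : ∀ v ∈ D, N v ⊆ P)
    (hgate : ∀ v ∈ D, ∀ σ : X → Bool, φ σ → σ v = f v (fun i => σ i.1))
    (hacyc : WellFounded (fun u v : D => (u : X) ∈ N (v : X))) :
    IndepSupport φ (P \ D) P :=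
  gate_identification_indepSupport_general φ P D N f hNP hgate hacyc
end
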